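/- Let α : ℕ → ℝ be a nonnegative sequence with ∑_{k=1}^{∞} k² α(k) < ∞ (i.e. the partial sums are bounded). Then for every r with 1 < r < 3, the double sums n^{-1} ∑_{i=1}^{n-1} ∑_{k=1}^{n-i} α(k)^{1/r} are bounded uniformly in n, i.e. there exists C < ∞ with n^{-1} ∑_{i=1}^{n-1} ∑_{k=1}^{n-i} α(k)^{1/r} ≤ C for all n ≥ 2. -/

import Mathlib

open Finset

theorem mixing_double_sum_bounded
    (α : ℕ → ℝ) (hα : ∀ k, 0 ≤ α k)
    (B : ℝ) (hsum : ∀ n : ℕ, ∑ k ∈ Finset.Icc 1 n, (k : ℝ) ^ 2 * α k ≤ B)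
    (r : ℝ) (hr1 : 1 < r) (hr3 : r < 3) :
    ∃ C : ℝ, ∀ n : ℕ, 2 ≤ n →
      (n : ℝ)⁻¹ * ∑ i ∈ Finset.Icc 1 (n - 1), ∑ k ∈ Finset.Icc 1 (n - i),
        (α k) ^ (1 / r) ≤ C := by
  have hr0 : (0:ℝ) < r := by linarith
  have hr1' : (0:ℝ) < r - 1 := by linarith
  set s : ℝ := r / (r - 1) with hs
  have hpq : r.HolderConjugate s := (Real.holderConjugate_iff_eq_conjExponent hr1).mpr hs
  have hs1 : 1 < s := hpq.symm.lt
  set p : ℝ := 2 / (r - 1) with hp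
  have hp1 : 1 < p := by
    rw [hp, lt_div_iff₀ hr1']; linarith
  -- the tail series
  have hsummable : Summable (fun k : ℕ => (k : ℝ) ^ (-p)) :=
    Real.summable_nat_rpow.mpr (by linarith)
  set T : ℝ := ∑' k : ℕ, (k : ℝ) ^ (-p) with hT
  have hgnonneg : ∀ k : ℕ, 0 ≤ (k : ℝ) ^ (-p) := fun k =>
    Real.rpow_nonneg (Nat.cast_nonneg k) _
  have hT0 : 0 ≤ T := tsum_nonneg hgnonneg
  have hB0 : 0 ≤ B := le_trans (by simp) (hsum 0)
  -- key pointwise inequality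
  have key : ∀ k : ℕ, 1 ≤ k → α k ^ (1 / r) ≤ (k : ℝ) ^ 2 * α k + (k : ℝ) ^ (-p) := by
    intro k hk
    have hkpos : (0:ℝ) < (k : ℝ) := by exact_mod_cast hk
    set a : ℝ := ((k : ℝ) ^ 2 * α k) ^ (1 / r) with ha
    set b : ℝ := (k : ℝ) ^ (-(2 / r)) with hb
    have ha0 : 0 ≤ a := Real.rpow_nonneg (mul_nonneg (by positivity) (hα k)) _
    have hb0 : 0 ≤ b := Real.rpow_nonneg hkpos.le _
    have hab : a * b = α k ^ (1 / r) := by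
      rw [ha, hb, Real.mul_rpow (by positivity) (hα k),
        ← Real.rpow_natCast (k:ℝ) 2, ← Real.rpow_mul hkpos.le,
        mul_right_comm, ← Real.rpow_add hkpos,
        show ((2:ℕ):ℝ) * (1 / r) + -(2 / r) = 0 by push_cast; ring,
        Real.rpow_zero, one_mul]
    have har : a ^ r = (k : ℝ) ^ 2 * α k := by
      rw [ha, ← Real.rpow_mul (mul_nonneg (by positivity) (hα k)),
        one_div, inv_mul_cancel₀ (ne_of_gt hr0), Real.rpow_one]
    have hbs : b ^ s = (k : ℝ) ^ (-p) := by
      rw [hb, ← Real.rpow_mul hkpos.le]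
      congr 1
      rw [hp, hs]
      field_simp
    calc α k ^ (1 / r) = a * b := hab.symm
      _ ≤ a ^ r / r + b ^ s / s := Real.young_inequality_of_nonneg ha0 hb0 hpq
      _ ≤ a ^ r + b ^ s := by
          have h1 : a ^ r / r ≤ a ^ r := div_le_self (Real.rpow_nonneg ha0 r) hr1.le
          have h2 : b ^ s / s ≤ b ^ s := div_le_self (Real.rpow_nonneg hb0 s) hs1.le
          linarith
      _ = (k : ℝ) ^ 2 * α k + (k : ℝ) ^ (-p) := by rw [har, hbs]
  -- inner sum bound
  have inner : ∀ m : ℕ, ∑ k ∈ Finset.Icc 1 m, α k ^ (1 / r) ≤ B + T := by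
    intro m
    calc ∑ k ∈ Finset.Icc 1 m, α k ^ (1 / r)
        ≤ ∑ k ∈ Finset.Icc 1 m, ((k : ℝ) ^ 2 * α k + (k : ℝ) ^ (-p)) := by
          apply Finset.sum_le_sum
          intro k hk
          exact key k (Finset.mem_Icc.mp hk).1
      _ = (∑ k ∈ Finset.Icc 1 m, (k : ℝ) ^ 2 * α k)
            + ∑ k ∈ Finset.Icc 1 m, (k : ℝ) ^ (-p) := Finset.sum_add_distrib
      _ ≤ B + T := by
          gcongr
          · exact hsum m
          · exact Summable.sum_le_tsum _ (fun k _ => hgnonneg k) hsummable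
  refine ⟨B + T, fun n hn => ?_⟩
  have hn0 : (0:ℝ) < (n : ℝ) := by positivity
  have h1 : ∑ i ∈ Finset.Icc 1 (n - 1), ∑ k ∈ Finset.Icc 1 (n - i), α k ^ (1 / r)
      ≤ (n : ℝ) * (B + T) := by
    calc ∑ i ∈ Finset.Icc 1 (n - 1), ∑ k ∈ Finset.Icc 1 (n - i), α k ^ (1 / r)
        ≤ ∑ i ∈ Finset.Icc 1 (n - 1), (B + T) :=
          Finset.sum_le_sum fun i _ => inner _
      _ = ((n - 1 : ℕ) : ℝ) * (B + T) := by
          rw [Finset.sum_const, Nat.card_Icc, nsmul_eq_mul]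
          norm_num
      _ ≤ (n : ℝ) * (B + T) := by
          apply mul_le_mul_of_nonneg_right _ (by linarith)
          exact_mod_cast Nat.sub_le n 1
  calc (n : ℝ)⁻¹ * ∑ i ∈ Finset.Icc 1 (n - 1), ∑ k ∈ Finset.Icc 1 (n - i), α k ^ (1 / r)
      ≤ (n : ℝ)⁻¹ * ((n : ℝ) * (B + T)) := by
        apply mul_le_mul_of_nonneg_left h1 (by positivity)
    _ = B + T := by field_simp
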